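/- Let E be a directed graph and e ∈ E⁰ a vertex. If the cardinality of C₁ᵉ \ {e} equals a cardinal λ > 1, then ⟨Cᵉ⟩, the inverse subsemigroup of G(E) generated by all cycles based at e, is isomorphic to the λ-polycyclic monoid P_λ. -/

import Mathlib

/-- A directed graph: vertices, edges, source and range maps. -/
structure DGraph where
  V : Type
  E : Type
  s : E → V
  r : E → V

namespace DGraph

variable {Q : DGraph}

/-- `pOk Q a l` : the list of edges `l` forms a valid path starting at vertex `a`. -/
def pOk (Q : DGraph) : Q.V → List Q.E → Prop
  | _, [] => True
  | a, e :: l => Q.s e = a ∧ pOk Q (Q.r e) l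

/-- The end vertex of an edge-list starting at `a`. -/
def pRng (Q : DGraph) (a : Q.V) (l : List Q.E) : Q.V :=
  l.foldl (fun _ e => Q.r e) a

theorem pRng_append (a : Q.V) (l₁ l₂ : List Q.E) :
    pRng Q a (l₁ ++ l₂) = pRng Q (pRng Q a l₁) l₂ :=
  List.foldl_append

theorem pOk_append {a : Q.V} {l₁ l₂ : List Q.E} (h₁ : pOk Q a l₁)
    (h₂ : pOk Q (pRng Q a l₁) l₂) : pOk Q a (l₁ ++ l₂) := by
  induction l₁ generalizing a with
  | nil => simpa [pRng] using h₂
  | cons e l ih =>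
      obtain ⟨he, hl⟩ := h₁
      exact ⟨he, ih hl h₂⟩

theorem pOk_drop {a : Q.V} {l₁ l₂ : List Q.E} (h : pOk Q a (l₁ ++ l₂)) :
    pOk Q (pRng Q a l₁) l₂ := by
  induction l₁ generalizing a with
  | nil => simpa [pRng] using h
  | cons e l ih => exact ih h.2

/-- A (finite, directed) path in the graph `Q`: a start vertex together with a
compatible list of edges.  Paths of length `0` are vertices. -/
structure GPath (Q : DGraph) where
  start : Q.V
  edges : List Q.E
  ok : pOk Q start edges

/-- The source `s(p)` of a path. -/
def GPath.src (p : GPath Q) : Q.V := p.start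

/-- The range `r(p)` of a path. -/
def GPath.rng (p : GPath Q) : Q.V := pRng Q p.start p.edges

/-- The length `|p|` of a path. -/
def GPath.length (p : GPath Q) : ℕ := p.edges.length

/-- The trivial (length zero) path at a vertex `a`. -/
def GPath.triv (Q : DGraph) (a : Q.V) : GPath Q := ⟨a, [], trivial⟩

/-- Concatenation of composable paths. -/
def GPath.comp (p q : GPath Q) (h : p.rng = q.start) : GPath Q :=
  ⟨p.start, p.edges ++ q.edges, pOk_append p.ok (by
    have hq := q.ok
    rw [← h] at hq
    exact hq)⟩

theorem GPath.comp_rng (p q : GPath Q) (h : p.rng = q.start) :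
    (p.comp q h).rng = q.rng := by
  show pRng Q p.start (p.edges ++ q.edges) = q.rng
  rw [pRng_append, show pRng Q p.start p.edges = q.start from h]
  rfl

theorem exists_sub {p q : GPath Q} (h1 : q.start = p.start)
    (h2 : p.edges <+: q.edges) :
    ∃ w : GPath Q, w.start = p.rng ∧ w.rng = q.rng ∧ p.edges ++ w.edges = q.edges := by
  obtain ⟨t, ht⟩ := h2
  have hok : pOk Q p.start (p.edges ++ t) := by rw [ht, ← h1]; exact q.ok
  refine ⟨⟨p.rng, t, pOk_drop hok⟩, rfl, ?_, ht⟩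
  show pRng Q (pRng Q p.start p.edges) t = pRng Q q.start q.edges
  rw [← pRng_append, ht, ← h1]

/-- If the path `q` decomposes as `p·w`, this is the path `w`. -/
noncomputable def subPath (p q : GPath Q) (h1 : q.start = p.start)
    (h2 : p.edges <+: q.edges) : GPath Q :=
  (exists_sub h1 h2).choose

theorem subPath_spec (p q : GPath Q) (h1 : q.start = p.start)
    (h2 : p.edges <+: q.edges) :
    (subPath p q h1 h2).start = p.rng ∧ (subPath p q h1 h2).rng = q.rng ∧
      p.edges ++ (subPath p q h1 h2).edges = q.edges :=
  (exists_sub h1 h2).choose_spec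

/-- The graph inverse semigroup `G(E)` over the graph `Q`: the element `0`
together with the elements `u v⁻¹` where `u, v` are paths with `r(u) = r(v)`. -/
inductive GIS (Q : DGraph) : Type
  | zero : GIS Q
  | elm (u v : GPath Q) (h : u.rng = v.rng) : GIS Q

instance : Zero (GIS Q) := ⟨GIS.zero⟩

-- Multiplication in the graph inverse semigroup:
-- `u₁v₁⁻¹ · u₂v₂⁻¹ = u₁wv₂⁻¹` if `u₂ = v₁w`, `u₁(v₂w)⁻¹` if `v₁ = u₂w`, `0` otherwise.
open Classical in
noncomputable def GIS.mul : GIS Q → GIS Q → GIS Q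
  | .zero, _ => .zero
  | _, .zero => .zero
  | .elm u₁ v₁ h₁, .elm u₂ v₂ h₂ =>
    if hA : u₂.start = v₁.start ∧ v₁.edges <+: u₂.edges then
      GIS.elm (u₁.comp (subPath v₁ u₂ hA.1 hA.2)
          (by rw [(subPath_spec v₁ u₂ hA.1 hA.2).1, h₁]))
        v₂
        (by rw [GPath.comp_rng, (subPath_spec v₁ u₂ hA.1 hA.2).2.1, h₂])
    else if hB : v₁.start = u₂.start ∧ u₂.edges <+: v₁.edges then
      GIS.elm u₁
        (v₂.comp (subPath u₂ v₁ hB.1 hB.2)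
          (by rw [(subPath_spec u₂ v₁ hB.1 hB.2).1, h₂]))
        (by rw [GPath.comp_rng, (subPath_spec u₂ v₁ hB.1 hB.2).2.1, h₁])
    else .zero

noncomputable instance : Mul (GIS Q) := ⟨GIS.mul⟩

/-- The inversion map of the graph inverse semigroup: `(uv⁻¹)⁻¹ = vu⁻¹`, `0⁻¹ = 0`. -/
def GIS.inv : GIS Q → GIS Q
  | .zero => .zero
  | .elm u v h => .elm v u h.symm

/-- The canonical identification of a path `u` with the element `u · r(u)⁻¹` of `G(E)`. -/
def toGIS (p : GPath Q) : GIS Q := GIS.elm p (GPath.triv Q p.rng) rfl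

end DGraph


namespace DGraph
variable {Q : DGraph}
/-- The inverse subsemigroup of `G(E)` generated by a subset `S`. -/
inductive genInv (S : Set (GIS Q)) : GIS Q → Prop
  | base {x : GIS Q} : x ∈ S → genInv S x
  | mul {x y : GIS Q} : genInv S x → genInv S y → genInv S (x * y)
  | inv {x : GIS Q} : genInv S x → genInv S (GIS.inv x)

/-- `Cᵉ`: the set of cycles based at `e` (including the trivial path `e`). -/
def Cyc (Q : DGraph) (e : Q.V) : Set (GPath Q) := {u | u.start = e ∧ u.rng = e}

/-- `C₁ᵉ`: cycles based at `e` whose non-trivial proper prefixes do not end at `e`. -/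
def Cyc1 (Q : DGraph) (e : Q.V) : Set (GPath Q) :=
  {u | u ∈ Cyc Q e ∧ ∀ v : GPath Q, v.start = u.start → v.edges <+: u.edges →
      v.edges ≠ [] → v.edges ≠ u.edges → v.rng ≠ e}
end DGraph


namespace DGraph
noncomputable instance {Q : DGraph} (S : Set (GIS Q)) :
    Mul {x : GIS Q // genInv S x} :=
  ⟨fun a b => ⟨a.1 * b.1, genInv.mul a.2 b.2⟩⟩
end DGraph


/-- The `λ`-polycyclic monoid over an index type `ι`: the monoid with zero
`⟨{pᵢ}, {pᵢ⁻¹} | pᵢ⁻¹pᵢ = 1, pⱼ⁻¹pᵢ = 0 for i ≠ j⟩`, realized by pairs of words. -/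
inductive PolyMon (ι : Type) : Type
  | zero : PolyMon ι
  | mk (u v : List ι) : PolyMon ι

open Classical in
noncomputable instance {ι : Type} : Mul (PolyMon ι) :=
  ⟨fun x y =>
    match x, y with
    | .zero, _ => .zero
    | _, .zero => .zero
    | .mk u₁ v₁, .mk u₂ v₂ =>
      if v₁ <+: u₂ then .mk (u₁ ++ u₂.drop v₁.length) v₂
      else if u₂ <+: v₁ then .mk u₁ (v₂ ++ v₁.drop u₂.length)
      else .zero⟩

/-!
The cycles in `C₁ᵉ \ {e}` form a prefix code whose products are exactly the cycles based at `e`: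
every such cycle is uniquely a product `c_a = c_{i₁} ⋯ c_{iₘ}` for a word `a = i₁ ⋯ iₘ`, and `c_a`
is a prefix of `c_b` iff `a` is a prefix of `b`. Hence `(a, b) ↦ c_a c_b⁻¹` is injective and
follows the multiplication rules of `P_λ` and `G(E)` case by case. Its image is `⟨Cᵉ⟩`, which
contains `0` because `λ > 1` provides distinct `c, d ∈ C₁ᵉ \ {e}`, and `c⁻¹ d = 0`.
-/

namespace List

variable {ι α : Type*}

structure IsPrefixCode (f : ι → List α) : Prop where
  ne_nil : ∀ i, f i ≠ []
  eq_of_prefix : ∀ {i j}, f i <+: f j → i = j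

namespace IsPrefixCode

variable {f : ι → List α}

theorem prefix_of_flatten_prefix (hf : IsPrefixCode f) {L₁ L₂ : List ι}
    (h : (L₁.map f).flatten <+: (L₂.map f).flatten) : L₁ <+: L₂ := by
  induction L₁ generalizing L₂ with
  | nil => exact nil_prefix
  | cons i L₁ ih =>
    cases L₂ with
    | nil => exact absurd (prefix_nil.1 ((prefix_append _ _).trans h)) (hf.ne_nil i)
    | cons j L₂ =>
      simp only [map_cons, flatten_cons] at h
      have hi : f i <+: f j ++ (L₂.map f).flatten := (prefix_append _ _).trans h
      obtain rfl : i = j := by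
        rcases prefix_or_prefix_of_prefix hi (prefix_append _ _) with hij | hji
        · exact hf.eq_of_prefix hij
        · exact (hf.eq_of_prefix hji).symm
      exact (prefix_cons_inj i).2 (ih ((prefix_append_right_inj _).1 h))

theorem flatten_prefix_iff (hf : IsPrefixCode f) {L₁ L₂ : List ι} :
    (L₁.map f).flatten <+: (L₂.map f).flatten ↔ L₁ <+: L₂ := by
  refine ⟨hf.prefix_of_flatten_prefix, ?_⟩
  rintro ⟨T, rfl⟩
  simp

theorem flatten_injective (hf : IsPrefixCode f) :
    Function.Injective fun L : List ι => (L.map f).flatten := by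
  intro L₁ L₂ h
  have h₁₂ : L₁ <+: L₂ := hf.prefix_of_flatten_prefix ⟨[], by rw [append_nil]; exact h⟩
  have h₂₁ : L₂ <+: L₁ := hf.prefix_of_flatten_prefix ⟨[], by rw [append_nil]; exact h.symm⟩
  exact h₁₂.eq_of_length (le_antisymm h₁₂.length_le h₂₁.length_le)

end IsPrefixCode

end List

namespace PolyMon

variable {ι : Type}

@[simp] theorem zero_mul (x : PolyMon ι) : zero * x = zero := by cases x <;> rfl

@[simp] theorem mul_zero (x : PolyMon ι) : x * zero = zero := by cases x <;> rfl

theorem mk_mul_mk_of_prefix {u₁ v₁ u₂ v₂ : List ι} (h : v₁ <+: u₂) :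
    mk u₁ v₁ * mk u₂ v₂ = mk (u₁ ++ u₂.drop v₁.length) v₂ :=
  if_pos h

theorem mk_mul_mk_of_prefix_of_not_prefix {u₁ v₁ u₂ v₂ : List ι} (hA : ¬v₁ <+: u₂) (h : u₂ <+: v₁) :
    mk u₁ v₁ * mk u₂ v₂ = mk u₁ (v₂ ++ v₁.drop u₂.length) :=
  (if_neg hA).trans (if_pos h)

theorem mk_mul_mk_of_not_prefix {u₁ v₁ u₂ v₂ : List ι} (hA : ¬v₁ <+: u₂) (hB : ¬u₂ <+: v₁) :
    mk u₁ v₁ * mk u₂ v₂ = zero :=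
  (if_neg hA).trans (if_neg hB)

end PolyMon

namespace DGraph

variable {Q : DGraph}

theorem GPath.ext {p q : GPath Q} (h₁ : p.start = q.start) (h₂ : p.edges = q.edges) : p = q := by
  cases p; cases q; simp_all

namespace GIS

@[simp] theorem zero_mul (x : GIS Q) : zero * x = zero := by cases x <;> rfl

@[simp] theorem mul_zero (x : GIS Q) : x * zero = zero := by cases x <;> rfl

theorem elm_mul_elm_of_append {u₁ v₁ u₂ v₂ u : GPath Q} {h₁ : u₁.rng = v₁.rng}
    {h₂ : u₂.rng = v₂.rng} {h : u.rng = v₂.rng} {t : List Q.E} (hs : u₂.start = v₁.start)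
    (ht : v₁.edges ++ t = u₂.edges) (hus : u.start = u₁.start) (hu : u.edges = u₁.edges ++ t) :
    elm u₁ v₁ h₁ * elm u₂ v₂ h₂ = elm u v₂ h := by
  show GIS.mul _ _ = _
  rw [GIS.mul, dif_pos ⟨hs, t, ht⟩]
  have hsub := (subPath_spec v₁ u₂ hs ⟨t, ht⟩).2.2
  congr 1
  refine GPath.ext hus.symm ?_
  rw [hu]
  exact congrArg (u₁.edges ++ ·) (List.append_cancel_left (hsub.trans ht.symm))

theorem elm_mul_elm_of_append_of_not_prefix {u₁ v₁ u₂ v₂ v : GPath Q} {h₁ : u₁.rng = v₁.rng}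
    {h₂ : u₂.rng = v₂.rng} {h : u₁.rng = v.rng} {t : List Q.E} (hA : ¬v₁.edges <+: u₂.edges)
    (hs : v₁.start = u₂.start) (ht : u₂.edges ++ t = v₁.edges) (hvs : v.start = v₂.start)
    (hv : v.edges = v₂.edges ++ t) :
    elm u₁ v₁ h₁ * elm u₂ v₂ h₂ = elm u₁ v h := by
  show GIS.mul _ _ = _
  rw [GIS.mul, dif_neg (fun hA' => hA hA'.2), dif_pos ⟨hs, t, ht⟩]
  have hsub := (subPath_spec u₂ v₁ hs ⟨t, ht⟩).2.2
  congr 1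
  refine GPath.ext hvs.symm ?_
  rw [hv]
  exact congrArg (v₂.edges ++ ·) (List.append_cancel_left (hsub.trans ht.symm))

theorem elm_mul_elm_of_not_prefix {u₁ v₁ u₂ v₂ : GPath Q} {h₁ : u₁.rng = v₁.rng}
    {h₂ : u₂.rng = v₂.rng} (hA : ¬v₁.edges <+: u₂.edges) (hB : ¬u₂.edges <+: v₁.edges) :
    elm u₁ v₁ h₁ * elm u₂ v₂ h₂ = zero := by
  show GIS.mul _ _ = _
  rw [GIS.mul, dif_neg (fun hA' => hA hA'.2), dif_neg (fun hB' => hB hB'.2)]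

end GIS

def primeCycles (Q : DGraph) (e : Q.V) : Set (GPath Q) := Cyc1 Q e \ {GPath.triv Q e}

variable {e : Q.V}

theorem primeCycles.ne_nil {c : GPath Q} (hc : c ∈ primeCycles Q e) : c.edges ≠ [] :=
  fun h => hc.2 (GPath.ext hc.1.1.1 h)

theorem primeCycles.eq_of_prefix {c d : GPath Q} (hc : c ∈ primeCycles Q e)
    (hd : d ∈ primeCycles Q e) (h : c.edges <+: d.edges) : c = d := by
  by_contra hne
  have hedges : c.edges ≠ d.edges := fun h' => hne (GPath.ext (hc.1.1.1.trans hd.1.1.1.symm) h')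
  exact hd.1.2 c (hc.1.1.1.trans hd.1.1.1.symm) h (ne_nil hc) hedges hc.1.1.2

variable {ι : Type} (σ : ι ≃ primeCycles Q e)

theorem isPrefixCode_primeCycles : List.IsPrefixCode fun i => (σ i).1.edges :=
  ⟨fun i => primeCycles.ne_nil (σ i).2,
    fun h => σ.injective (Subtype.ext (primeCycles.eq_of_prefix (σ _).2 (σ _).2 h))⟩

theorem pOk_flatten_primeCycles (a : List ι) :
    pOk Q e (a.map fun i => (σ i).1.edges).flatten ∧
      pRng Q e (a.map fun i => (σ i).1.edges).flatten = e := by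
  induction a with
  | nil => exact ⟨trivial, rfl⟩
  | cons i a ih =>
    obtain ⟨⟨⟨hstart, hrng⟩, -⟩, -⟩ := (σ i).2
    have hok : pOk Q e (σ i).1.edges := by
      have := (σ i).1.ok
      rwa [hstart] at this
    have hrng' : pRng Q e (σ i).1.edges = e := by
      have : (σ i).1.rng = e := hrng
      rwa [GPath.rng, hstart] at this
    simp only [List.map_cons, List.flatten_cons]
    exact ⟨pOk_append hok (by rw [hrng']; exact ih.1), by rw [pRng_append, hrng', ih.2]⟩

def cycleOfWord (a : List ι) : GPath Q :=
  ⟨e, (a.map fun i => (σ i).1.edges).flatten, (pOk_flatten_primeCycles σ a).1⟩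

@[simp] theorem cycleOfWord_start (a : List ι) : (cycleOfWord σ a).start = e := rfl

@[simp] theorem cycleOfWord_edges (a : List ι) :
    (cycleOfWord σ a).edges = (a.map fun i => (σ i).1.edges).flatten := rfl

theorem cycleOfWord_rng (a : List ι) : (cycleOfWord σ a).rng = e :=
  (pOk_flatten_primeCycles σ a).2

theorem cycleOfWord_nil : cycleOfWord σ [] = GPath.triv Q e := rfl

theorem cycleOfWord_append_edges (a b : List ι) :
    (cycleOfWord σ (a ++ b)).edges = (cycleOfWord σ a).edges ++ (cycleOfWord σ b).edges := by
  simp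

theorem cycleOfWord_prefix_iff {a b : List ι} :
    (cycleOfWord σ a).edges <+: (cycleOfWord σ b).edges ↔ a <+: b :=
  (isPrefixCode_primeCycles σ).flatten_prefix_iff

theorem cycleOfWord_injective : Function.Injective (cycleOfWord σ) := fun _ _ h =>
  (isPrefixCode_primeCycles σ).flatten_injective (congrArg GPath.edges h)

theorem exists_cycleOfWord_eq {u : GPath Q} (hu : u ∈ Cyc Q e) : ∃ a, cycleOfWord σ a = u := by
  induction hn : u.edges.length using Nat.strong_induction_on generalizing u with
  | _ n ih =>
  subst hn
  by_cases hnil : u.edges = []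
  · exact ⟨[], GPath.ext hu.1.symm (by simp [hnil])⟩
  by_cases hprime : u ∈ Cyc1 Q e
  · have hu' : u ∈ primeCycles Q e :=
      ⟨hprime, fun h => hnil (by rw [Set.mem_singleton_iff.1 h]; rfl)⟩
    exact ⟨[σ.symm ⟨u, hu'⟩], GPath.ext hu.1.symm (by simp)⟩
  -- otherwise `u = v w` for a nontrivial proper prefix `v` ending at `e`, and induction applies
  obtain ⟨v, hvs, hvp, hvne, hvproper, hvr⟩ :
      ∃ v : GPath Q, v.start = u.start ∧ v.edges <+: u.edges ∧ v.edges ≠ [] ∧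
        v.edges ≠ u.edges ∧ v.rng = e := by
    simpa [Cyc1, hu] using hprime
  obtain ⟨w, hws, hwr, hvw⟩ := exists_sub hvs.symm hvp
  have hlen : u.edges.length = v.edges.length + w.edges.length := by rw [← hvw, List.length_append]
  have hv_lt : v.edges.length < u.edges.length :=
    lt_of_le_of_ne hvp.length_le fun h => hvproper (hvp.eq_of_length h)
  have hw_lt : w.edges.length < u.edges.length := by
    have := List.length_pos_iff.2 hvne
    omega
  obtain ⟨a, rfl⟩ := ih _ hv_lt ⟨hvs.trans hu.1, hvr⟩ rfl
  obtain ⟨b, rfl⟩ := ih _ hw_lt ⟨hws.trans hvr, hwr.trans hu.2⟩ rfl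
  exact ⟨a ++ b, GPath.ext hu.1.symm (by rw [cycleOfWord_append_edges, hvw])⟩

def polyToGIS : PolyMon ι → GIS Q
  | .zero => .zero
  | .mk a b => .elm (cycleOfWord σ a) (cycleOfWord σ b)
      ((cycleOfWord_rng σ a).trans (cycleOfWord_rng σ b).symm)

theorem polyToGIS_injective : Function.Injective (polyToGIS σ) := by
  rintro (_ | ⟨a, b⟩) (_ | ⟨a', b'⟩) h <;> simp only [polyToGIS, reduceCtorEq] at h
  · rfl
  · obtain ⟨ha, hb⟩ := GIS.elm.inj h
    rw [cycleOfWord_injective σ ha, cycleOfWord_injective σ hb]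

theorem polyToGIS_mul (x y : PolyMon ι) :
    polyToGIS σ (x * y) = polyToGIS σ x * polyToGIS σ y := by
  rcases x with _ | ⟨a₁, b₁⟩
  · simp [polyToGIS]
  rcases y with _ | ⟨a₂, b₂⟩
  · simp [polyToGIS]
  by_cases hA : b₁ <+: a₂
  · obtain ⟨t, rfl⟩ := hA
    rw [PolyMon.mk_mul_mk_of_prefix (List.prefix_append _ _), List.drop_left]
    symm
    exact GIS.elm_mul_elm_of_append rfl (cycleOfWord_append_edges σ _ _).symm rfl
      (cycleOfWord_append_edges σ _ _)
  have hA' : ¬(cycleOfWord σ b₁).edges <+: (cycleOfWord σ a₂).edges :=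
    fun h => hA ((cycleOfWord_prefix_iff σ).1 h)
  by_cases hB : a₂ <+: b₁
  · obtain ⟨t, rfl⟩ := hB
    rw [PolyMon.mk_mul_mk_of_prefix_of_not_prefix hA (List.prefix_append _ _), List.drop_left]
    symm
    exact GIS.elm_mul_elm_of_append_of_not_prefix hA' rfl (cycleOfWord_append_edges σ _ _).symm rfl
      (cycleOfWord_append_edges σ _ _)
  rw [PolyMon.mk_mul_mk_of_not_prefix hA hB]
  exact (GIS.elm_mul_elm_of_not_prefix hA' fun h => hB ((cycleOfWord_prefix_iff σ).1 h)).symm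

theorem polyToGIS_mk_swap (a b : List ι) :
    polyToGIS σ (.mk b a) = GIS.inv (polyToGIS σ (.mk a b)) := rfl

theorem polyToGIS_mk_nil (a : List ι) : polyToGIS σ (.mk a []) = toGIS (cycleOfWord σ a) := by
  show GIS.elm _ _ _ = GIS.elm _ _ _
  congr 1
  rw [cycleOfWord_rng, cycleOfWord_nil]

theorem genInv_cycles_iff [Nontrivial ι] {x : GIS Q} :
    genInv (toGIS '' Cyc Q e) x ↔ x ∈ Set.range (polyToGIS σ) := by
  constructor
  · intro hx
    induction hx with
    | base hu =>
      obtain ⟨u, hu, rfl⟩ := hu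
      obtain ⟨a, rfl⟩ := exists_cycleOfWord_eq σ hu
      exact ⟨.mk a [], polyToGIS_mk_nil σ a⟩
    | mul _ _ ihx ihy =>
      obtain ⟨x, rfl⟩ := ihx
      obtain ⟨y, rfl⟩ := ihy
      exact ⟨x * y, polyToGIS_mul σ x y⟩
    | inv _ ih =>
      obtain ⟨_ | ⟨a, b⟩, rfl⟩ := ih
      · exact ⟨.zero, rfl⟩
      · exact ⟨.mk b a, rfl⟩
  · have hcycle (a : List ι) : genInv (toGIS '' Cyc Q e) (polyToGIS σ (.mk a [])) :=
      .base ⟨_, ⟨rfl, cycleOfWord_rng σ a⟩, (polyToGIS_mk_nil σ a).symm⟩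
    rintro ⟨_ | ⟨a, b⟩, rfl⟩
    · obtain ⟨i, j, hij⟩ := exists_pair_ne ι
      have hzero : (PolyMon.zero : PolyMon ι) = .mk [] [i] * .mk [j] [] :=
        (PolyMon.mk_mul_mk_of_not_prefix (by simpa using hij) (by simpa using hij.symm)).symm
      rw [hzero, polyToGIS_mul, polyToGIS_mk_swap]
      exact .mul (.inv (hcycle _)) (hcycle _)
    · have hmk : (PolyMon.mk a b : PolyMon ι) = .mk a [] * .mk [] b := by
        rw [PolyMon.mk_mul_mk_of_prefix List.nil_prefix]
        simp
      rw [hmk, polyToGIS_mul, polyToGIS_mk_swap]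
      exact .mul (hcycle _) (.inv (hcycle _))

end DGraph

open DGraph

theorem stmt5 (Q : DGraph) (e : Q.V) (ι : Type)
    (hcard : Nonempty (ι ≃ ↥(Cyc1 Q e \ {GPath.triv Q e})))
    (hgt : 1 < Cardinal.mk ι) :
    ∃ f : {x : GIS Q // genInv (toGIS '' Cyc Q e) x} ≃ PolyMon ι,
      ∀ a b, f (a * b) = f a * f b := by
  obtain ⟨σ⟩ := hcard
  have : Nontrivial ι := Cardinal.one_lt_iff_nontrivial.mp hgt
  let g : PolyMon ι ≃ {x : GIS Q // genInv (toGIS '' Cyc Q e) x} :=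
    Equiv.ofBijective (fun y => ⟨polyToGIS σ y, (genInv_cycles_iff σ).2 ⟨y, rfl⟩⟩)
      ⟨fun _ _ h => polyToGIS_injective σ (congrArg Subtype.val h),
        fun x => (((genInv_cycles_iff σ).1 x.2).imp fun _ h => Subtype.ext h)⟩
  let φ := MulEquiv.mk' g fun x y => Subtype.ext (polyToGIS_mul σ x y)
  exact ⟨φ.symm.toEquiv, map_mul φ.symm⟩
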